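/- Let ℰ → ℳ be a vector bundle in the category of supermanifolds. For every integer j, the map Ξ ↦ Ξ_j from linear vector fields on ℰ to linear vector fields on [−j]ℰ is a homomorphism of Lie superalgebras: [Ξ_j, Ξ′_j] = ([Ξ, Ξ′])_j for all linear vector fields Ξ, Ξ′ on ℰ, where the brackets are graded commutators. -/
import Mathlib


/-!
We model (ℤ-graded) supermanifolds through their ℤ-graded supercommutative
algebras of smooth functions, and vector fields as graded derivations.
-/

noncomputable section

/-- The sign `(−1)^n` for an integer `n`. -/
def sgn (n : ℤ) : ℤ := (-1) ^ n.natAbs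

/-- The graded commutator `[D, E] = D ∘ E − (−1)^{pq} E ∘ D` of two operators,
where `p` and `q` are the degrees of `D` and `E`. -/
def sComm {W : Type} [AddCommGroup W] [Module ℝ W] (p q : ℤ)
    (D E : Module.End ℝ W) : Module.End ℝ W :=
  D * E - sgn (p * q) • (E * D)

/-- A ℤ-graded supercommutative ℝ-algebra; the model for the algebra of smooth
functions `C^∞(ℳ)` of a ℤ-graded supermanifold `ℳ`. -/
structure SuperAlgebra where
  carrier : Type
  [ringStr : Ring carrier]
  [algStr : Algebra ℝ carrier]
  grading : ℤ → Submodule ℝ carrier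
  [gradedStr : GradedAlgebra grading]
  supercomm : ∀ {i j : ℤ} {a b : carrier}, a ∈ grading i → b ∈ grading j →
    a * b = sgn (i * j) • (b * a)

attribute [instance] SuperAlgebra.ringStr SuperAlgebra.algStr SuperAlgebra.gradedStr

namespace SuperAlgebra

/-- An operator is homogeneous of degree `j` if it shifts the grading by `j`. -/
def IsHomogOp (𝒮 : SuperAlgebra) (j : ℤ) (D : Module.End ℝ 𝒮.carrier) : Prop :=
  ∀ i : ℤ, ∀ a ∈ 𝒮.grading i, D a ∈ 𝒮.grading (i + j)

/-- A vector field of degree `j` on a supermanifold: a degree `j` graded (left)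
derivation of the function algebra, i.e. `D(ab) = D(a)b + (−1)^{j|a|} a D(b)`. -/
def IsSuperDer (𝒮 : SuperAlgebra) (j : ℤ) (D : Module.End ℝ 𝒮.carrier) : Prop :=
  𝒮.IsHomogOp j D ∧
    ∀ i : ℤ, ∀ a ∈ 𝒮.grading i, ∀ b : 𝒮.carrier,
      D (a * b) = D a * b + sgn (j * i) • (a * D b)

/-- An (ordinary) manifold is a supermanifold whose functions are concentrated
in degree `0`. -/
def Ordinary (𝒮 : SuperAlgebra) : Prop := ∀ i : ℤ, i ≠ 0 → 𝒮.grading i = ⊥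

end SuperAlgebra

/-- The function algebra of the total space of a vector bundle `ℰ → ℳ` in the
category of supermanifolds: it contains the functions pulled back from the base
(via `incl`) and the distinguished subspace `lin` of fibrewise-linear functions.
The axiom `der_ext` encodes that a vector field on the total space is
determined by its values on base functions and fibre coordinates. -/
structure BundleAlg (𝒮 : SuperAlgebra) where
  Ω : SuperAlgebra
  incl : 𝒮.carrier →ₐ[ℝ] Ω.carrier
  incl_inj : Function.Injective incl
  incl_grading : ∀ {i : ℤ} (f : 𝒮.carrier), f ∈ 𝒮.grading i → incl f ∈ Ω.grading i
  lin : Submodule ℝ Ω.carrier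
  lin_smul : ∀ (f : 𝒮.carrier), ∀ α ∈ lin, incl f * α ∈ lin
  der_ext : ∀ (j : ℤ) (D D' : Module.End ℝ Ω.carrier),
    Ω.IsSuperDer j D → Ω.IsSuperDer j D' →
    (∀ f, D (incl f) = D' (incl f)) → (∀ α ∈ lin, D α = D' α) → D = D'

namespace BundleAlg

variable {𝒮 : SuperAlgebra}

/-- A *linear* vector field of degree `j` on the total space of a vector
bundle: a degree `j` derivation preserving the fibrewise-linear functions
(and covering a vector field on the base). -/
def IsLinVF (E : BundleAlg 𝒮) (j : ℤ) (Ξ : Module.End ℝ E.Ω.carrier) : Prop :=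
  E.Ω.IsSuperDer j Ξ ∧ (∀ α ∈ E.lin, Ξ α ∈ E.lin) ∧ ∀ f, ∃ g, Ξ (E.incl f) = E.incl g

/-- `φ` is the base vector field of the linear vector field `Ξ`. -/
def HasBase (E : BundleAlg 𝒮) (Ξ : Module.End ℝ E.Ω.carrier)
    (φ : Module.End ℝ 𝒮.carrier) : Prop :=
  ∀ f, Ξ (E.incl f) = E.incl (φ f)

/-- Multiplication by (the pullback of) a base function, as an operator. -/
def mulOp (E : BundleAlg 𝒮) (f : 𝒮.carrier) : Module.End ℝ E.Ω.carrier :=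
  LinearMap.mulLeft ℝ (E.incl f)

end BundleAlg

/-- The degree-shift `[−j]` applied to a vector bundle `ℰ → ℳ`, realized as the
degree `j` left `C^∞(ℳ)`-module isomorphism `α ↦ α̂` from the fibrewise-linear
functions on `ℰ` to those on `[−j]ℰ`. -/
structure Shift (𝒮 : SuperAlgebra) (E E' : BundleAlg 𝒮) (j : ℤ) where
  hat : E.Ω.carrier →ₗ[ℝ] E'.Ω.carrier
  hat_lin : ∀ α ∈ E.lin, hat α ∈ E'.lin
  hat_bij : ∀ β ∈ E'.lin, ∃! α, α ∈ E.lin ∧ hat α = β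
  hat_grading : ∀ {i : ℤ} (α : E.Ω.carrier), α ∈ E.lin → α ∈ E.Ω.grading i →
    hat α ∈ E'.Ω.grading (i + j)
  hat_smul : ∀ f, ∀ α ∈ E.lin, hat (E.incl f * α) = E'.incl f * hat α

/-- `Ξ'` is the linear vector field on `[−j]ℰ` induced by the linear vector
field `Ξ` on `ℰ` (both of degree `k`): it is linear, has the same base vector
field, and satisfies `Ξ'(α̂) = (Ξ(α))^` on fibrewise-linear functions. -/
def Shifted {𝒮 : SuperAlgebra} {E E' : BundleAlg 𝒮} {j : ℤ} (S : Shift 𝒮 E E' j)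
    (k : ℤ) (Ξ : Module.End ℝ E.Ω.carrier) (Ξ' : Module.End ℝ E'.Ω.carrier) : Prop :=
  E'.IsLinVF k Ξ' ∧
  (∀ f g, Ξ (E.incl f) = E.incl g → Ξ' (E'.incl f) = E'.incl g) ∧
  ∀ α ∈ E.lin, Ξ' (S.hat α) = S.hat (Ξ α)

/-- `sgn` only depends on parity. -/
lemma sgn_eq (n : ℤ) : sgn n = if Even n then 1 else -1 := by
  rw [sgn]; split
  · exact (Int.natAbs_even.mpr ‹Even n›).neg_one_pow
  · exact (Int.natAbs_odd.mpr (Int.not_even_iff_odd.mp ‹_›)).neg_one_pow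

lemma sgn_add (m n : ℤ) : sgn (m + n) = sgn m * sgn n := by
  by_cases hm : Even m <;> by_cases hn : Even n <;>
    simp [sgn_eq, Int.even_add, hm, hn]

lemma sgn_sq (n : ℤ) : sgn n * sgn n = 1 := by
  by_cases hn : Even n <;> simp [sgn_eq, hn]

/-- The graded commutator of super-derivations is a super-derivation. -/
lemma sComm_isSuperDer (𝒮 : SuperAlgebra) (p q : ℤ)
    (D E : Module.End ℝ 𝒮.carrier)
    (hD : 𝒮.IsSuperDer p D) (hE : 𝒮.IsSuperDer q E) :
    𝒮.IsSuperDer (p + q) (sComm p q D E) := by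
  obtain ⟨hDh, hDl⟩ := hD
  obtain ⟨hEh, hEl⟩ := hE
  constructor
  · intro i a ha
    have h1 : D (E a) ∈ 𝒮.grading (i + (p + q)) := by
      have := hDh (i + q) (E a) (hEh i a ha)
      rwa [show i + q + p = i + (p + q) by ring] at this
    have h2 : E (D a) ∈ 𝒮.grading (i + (p + q)) := by
      have := hEh (i + p) (D a) (hDh i a ha)
      rwa [show i + p + q = i + (p + q) by ring] at this
    simp only [sComm, LinearMap.sub_apply, LinearMap.smul_apply, Module.End.mul_apply]
    exact Submodule.sub_mem _ h1 (zsmul_mem h2 _)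
  · intro i a ha b
    have hEa : E a ∈ 𝒮.grading (i + q) := hEh i a ha
    have hDa : D a ∈ 𝒮.grading (i + p) := hDh i a ha
    simp only [sComm, LinearMap.sub_apply, LinearMap.smul_apply, Module.End.mul_apply]
    rw [hEl i a ha b, map_add, map_zsmul, hDl (i + q) (E a) hEa b,
      hDl i a ha (E b), hDl i a ha b, map_add, map_zsmul,
      hEl (i + p) (D a) hDa b, hEl i a ha (D b)]
    have e1 : sgn (p * (i + q)) = sgn (p * i) * sgn (p * q) := by
      rw [show p * (i + q) = p * i + p * q by ring, sgn_add]
    have e2 : sgn (q * (i + p)) = sgn (q * i) * sgn (p * q) := by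
      rw [show q * (i + p) = q * i + p * q by ring, sgn_add]
    have e3 : sgn ((p + q) * i) = sgn (p * i) * sgn (q * i) := by
      rw [show (p + q) * i = p * i + q * i by ring, sgn_add]
    rw [e1, e2, e3]
    set s1 := sgn (p * i)
    set s2 := sgn (q * i)
    set s3 := sgn (p * q) with hs3
    have hsq : s3 * s3 = 1 := sgn_sq _
    clear_value s1 s2 s3
    rw [sub_mul, smul_mul_assoc, mul_sub, mul_smul_comm]
    match_scalars
    any_goals ring1
    linear_combination (-s2 : ℤ) * hsq

/-- Let `ℰ → ℳ` be a vector bundle in the category of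
supermanifolds, `j : ℤ`.  The map `Ξ ↦ Ξ_j` from linear vector fields on `ℰ`
to linear vector fields on `[−j]ℰ` is a homomorphism of Lie superalgebras:
`[Ξ_j, Ξ'_j] = ([Ξ, Ξ'])_j` for all linear vector fields `Ξ, Ξ'` on `ℰ`, where
the brackets are graded commutators. -/
theorem shift_of_linear_vector_fields_lie_hom
    (𝒮 : SuperAlgebra) (E E' : BundleAlg 𝒮) (j : ℤ) (S : Shift 𝒮 E E' j)
    (p q : ℤ) (Ξ Ψ : Module.End ℝ E.Ω.carrier)
    (Ξ' Ψ' : Module.End ℝ E'.Ω.carrier)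
    (hΞ : E.IsLinVF p Ξ) (hΨ : E.IsLinVF q Ψ)
    (hΞ' : Shifted S p Ξ Ξ') (hΨ' : Shifted S q Ψ Ψ') :
    Shifted S (p + q) (sComm p q Ξ Ψ) (sComm p q Ξ' Ψ') := by
  obtain ⟨⟨hΞd, hΞl, hΞb⟩, hΞbase, hΞhat⟩ := hΞ'
  obtain ⟨⟨hΨd, hΨl, hΨb⟩, hΨbase, hΨhat⟩ := hΨ'
  obtain ⟨hΞd0, hΞl0, hΞb0⟩ := hΞ
  obtain ⟨hΨd0, hΨl0, hΨb0⟩ := hΨ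
  refine ⟨⟨sComm_isSuperDer E'.Ω p q Ξ' Ψ' hΞd hΨd, ?_, ?_⟩, ?_, ?_⟩
  · intro α hα
    simp only [sComm, LinearMap.sub_apply, LinearMap.smul_apply, Module.End.mul_apply]
    exact Submodule.sub_mem _ (hΞl _ (hΨl α hα)) (zsmul_mem (hΨl _ (hΞl α hα)) _)
  · intro f
    obtain ⟨g₂, hg₂⟩ := hΨb f
    obtain ⟨g₃, hg₃⟩ := hΞb g₂
    obtain ⟨g₁, hg₁⟩ := hΞb f
    obtain ⟨g₄, hg₄⟩ := hΨb g₁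
    refine ⟨g₃ - sgn (p * q) • g₄, ?_⟩
    simp only [sComm, LinearMap.sub_apply, LinearMap.smul_apply, Module.End.mul_apply]
    rw [hg₂, hg₃, hg₁, hg₄, map_sub, map_zsmul]
  · intro f g hfg
    obtain ⟨g₂, hg₂⟩ := hΨb0 f
    obtain ⟨g₃, hg₃⟩ := hΞb0 g₂
    obtain ⟨g₁, hg₁⟩ := hΞb0 f
    obtain ⟨g₄, hg₄⟩ := hΨb0 g₁
    have key : E.incl (g₃ - sgn (p * q) • g₄) = E.incl g := by
      rw [← hfg]
      simp only [sComm, LinearMap.sub_apply, LinearMap.smul_apply, Module.End.mul_apply]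
      rw [hg₂, hg₃, hg₁, hg₄, map_sub, map_zsmul]
    have hg : g = g₃ - sgn (p * q) • g₄ := (E.incl_inj key).symm
    simp only [sComm, LinearMap.sub_apply, LinearMap.smul_apply, Module.End.mul_apply]
    rw [hΨbase f g₂ hg₂, hΞbase g₂ g₃ hg₃, hΞbase f g₁ hg₁, hΨbase g₁ g₄ hg₄,
      hg, map_sub, map_zsmul]
  · intro α hα
    simp only [sComm, LinearMap.sub_apply, LinearMap.smul_apply, Module.End.mul_apply]
    rw [hΨhat α hα, hΞhat _ (hΨl0 α hα), hΞhat α hα, hΨhat _ (hΞl0 α hα),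
      map_sub, map_zsmul]
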